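/- arXiv:2206.10383 — 3 statements merged into one kernel-verified Lean document; each statement's English description precedes it below -/
import Mathlib

section
/- The number of distinct indices i ∈ [2,n] with δ(i) ≠ 0 is at most O(√(nq)). Concretely, |{i ∈ [2,n] : lmco(i) ≠ lmco(i−1)}| ≤ c·√(nq) for a universal constant c. -/
open Finset

/-- `[i,j]` is a co-occurrence of `Q` in the length-`n` string `S` (1-indexed):
`1 ≤ i ≤ j ≤ n` and every character of `Q` occurs in `S[i..j]`. -/
def Cooc {α : Type*} (n : ℕ) (S : ℕ → α) (Q : Finset α) (i j : ℕ) : Prop :=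
  1 ≤ i ∧ i ≤ j ∧ j ≤ n ∧ ∀ c ∈ Q, ∃ k, i ≤ k ∧ k ≤ j ∧ S k = c

/-- `[i,j]` is a left-minimal co-occurrence: a co-occurrence such that `[i+1,j]` is not. -/
def LeftMinCooc {α : Type*} (n : ℕ) (S : ℕ → α) (Q : Finset α) (i j : ℕ) : Prop :=
  Cooc n S Q i j ∧ ¬ Cooc n S Q (i+1) j

/-- `[i,j]` is a minimal co-occurrence: a co-occurrence such that neither
`[i+1,j]` nor `[i,j-1]` is a co-occurrence. -/
def MinCooc {α : Type*} (n : ℕ) (S : ℕ → α) (Q : Finset α) (i j : ℕ) : Prop :=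
  Cooc n S Q i j ∧ ¬ Cooc n S Q (i+1) j ∧ ¬ Cooc n S Q i (j-1)

/-- `lmco n S Q w`: number of left-minimal co-occurrences of `Q` in `S` of length `w`. -/
noncomputable def lmco {α : Type*} (n : ℕ) (S : ℕ → α) (Q : Finset α) (w : ℕ) : ℕ :=
  {p : ℕ × ℕ | LeftMinCooc n S Q p.1 p.2 ∧ p.2 - p.1 + 1 = w}.ncard

/-- `dlt n S Q i = lmco(i) - lmco(i-1)` as an integer. -/
noncomputable def dlt {α : Type*} (n : ℕ) (S : ℕ → α) (Q : Finset α) (i : ℕ) : ℤ :=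
  (lmco n S Q i : ℤ) - (lmco n S Q (i-1) : ℤ)

/-- `coN n S Q w`: number of length-`w` co-occurrences of `Q` in `S`, i.e. the number of
windows `[k-w+1,k]` with `w ≤ k ≤ n` that are co-occurrences. -/
noncomputable def coN {α : Type*} (n : ℕ) (S : ℕ → α) (Q : Finset α) (w : ℕ) : ℕ :=
  {k : ℕ | w ≤ k ∧ k ≤ n ∧ Cooc n S Q (k - w + 1) k}.ncard

/-! For a fixed start `i`, the ends `j` for which `[i, j]` is a left-minimal co-occurrence form an
interval, from the end of the shortest co-occurrence starting at `i` to just before the next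
occurrence of `S i`. So every `w` with `δ(w) ≠ 0` is the length of a left-minimal co-occurrence
sitting at the left end of such an interval, or `w - 1` is the length of one at the right end;
within each kind, distinct `w` have distinct starts. A family of `k` left-minimal co-occurrences
with distinct starts and distinct lengths has total length at least `k(k+1)/2`, and at most `nq`,
because the members containing a given position start with pairwise different characters of `Q`.
Hence each kind has at most `√(2nq)` members. -/

variable {α : Type*} {n : ℕ} {S : ℕ → α} {Q : Finset α}

lemma Cooc.mono_right {i j j' : ℕ} (h : Cooc n S Q i j) (hjj' : j ≤ j') (hj'n : j' ≤ n) :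
    Cooc n S Q i j' := by
  obtain ⟨hi, hij, -, hcover⟩ := h
  refine ⟨hi, hij.trans hjj', hj'n, fun c hc => ?_⟩
  obtain ⟨k, hik, hkj, hk⟩ := hcover c hc
  exact ⟨k, hik, hkj.trans hjj', hk⟩

namespace LeftMinCooc

variable {i j j' : ℕ}

lemma of_le_of_le {j'' : ℕ} (h : LeftMinCooc n S Q i j) (h'' : LeftMinCooc n S Q i j'')
    (hjj' : j ≤ j') (hj'j'' : j' ≤ j'') : LeftMinCooc n S Q i j' :=
  ⟨h.1.mono_right hjj' (hj'j''.trans h''.1.2.2.1),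
    fun hc => h''.2 (hc.mono_right hj'j'' h''.1.2.2.1)⟩

lemma eq_of_not_pred (h : LeftMinCooc n S Q i j) (hj : ¬ LeftMinCooc n S Q i (j - 1))
    (h' : LeftMinCooc n S Q i j') (hj' : ¬ LeftMinCooc n S Q i (j' - 1)) : j = j' := by
  rcases lt_trichotomy j j' with hlt | heq | hlt
  · exact absurd (h.of_le_of_le h' (by omega) (by omega)) hj'
  · exact heq
  · exact absurd (h'.of_le_of_le h (by omega) (by omega)) hj

lemma eq_of_not_succ (h : LeftMinCooc n S Q i j) (hj : ¬ LeftMinCooc n S Q i (j + 1))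
    (h' : LeftMinCooc n S Q i j') (hj' : ¬ LeftMinCooc n S Q i (j' + 1)) : j = j' := by
  rcases lt_trichotomy j j' with hlt | heq | hlt
  · exact absurd (h.of_le_of_le h' (by omega) hlt) hj
  · exact heq
  · exact absurd (h'.of_le_of_le h (by omega) hlt) hj'

/-- The character that `[i+1, j]` misses can only be `S i`. -/
lemma start_mem_and_not_repeat (hQ : Q.Nonempty) (h : LeftMinCooc n S Q i j) :
    S i ∈ Q ∧ ∀ k, i < k → k ≤ j → S k ≠ S i := by
  obtain ⟨⟨hi, hij, hjn, hcover⟩, hnot⟩ := h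
  obtain ⟨c, hc, hmiss⟩ : ∃ c ∈ Q, ∀ k, i < k → k ≤ j → S k ≠ c := by
    by_contra! hall
    obtain ⟨c, hc⟩ := hQ
    obtain ⟨k, hik, hkj, -⟩ := hall c hc
    exact hnot ⟨by omega, by omega, hjn, hall⟩
  obtain ⟨k, hik, hkj, rfl⟩ := hcover c hc
  obtain rfl : k = i := by
    by_contra hne
    exact hmiss k (by omega) hkj rfl
  exact ⟨hc, hmiss⟩

end LeftMinCooc

lemma lmco_eq_ncard {w : ℕ} (hw : 1 ≤ w) :
    lmco n S Q w = {i : ℕ | LeftMinCooc n S Q i (i + (w - 1))}.ncard := by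
  have hset : {p : ℕ × ℕ | LeftMinCooc n S Q p.1 p.2 ∧ p.2 - p.1 + 1 = w}
      = (fun i => (i, i + (w - 1))) '' {i : ℕ | LeftMinCooc n S Q i (i + (w - 1))} := by
    ext ⟨i, j⟩
    simp only [Set.mem_ofPred_eq, Set.mem_image, Prod.mk.injEq]
    constructor
    · rintro ⟨h, hlen⟩
      obtain rfl : j = i + (w - 1) := by have := h.1.2.1; omega
      exact ⟨i, h, rfl, rfl⟩
    · rintro ⟨i, h, rfl, rfl⟩
      exact ⟨h, by omega⟩
  rw [lmco, hset, Set.ncard_image_of_injective _ fun a b hab => congrArg Prod.fst hab]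

lemma exists_end_of_lmco_ne {w : ℕ} (hw : 2 ≤ w) (hne : lmco n S Q w ≠ lmco n S Q (w - 1)) :
    ∃ i, (LeftMinCooc n S Q i (i + (w - 1)) ∧ ¬ LeftMinCooc n S Q i (i + (w - 1) - 1)) ∨
      (LeftMinCooc n S Q i (i + (w - 2)) ∧ ¬ LeftMinCooc n S Q i (i + (w - 2) + 1)) := by
  by_contra! hend
  refine hne ?_
  rw [lmco_eq_ncard (by omega), lmco_eq_ncard (by omega)]
  congr 1
  ext i
  obtain ⟨hleft, hright⟩ := hend i
  rw [show i + (w - 1) - 1 = i + (w - 1 - 1) by omega] at hleft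
  rw [show i + (w - 2) + 1 = i + (w - 1) by omega, show w - 2 = w - 1 - 1 by omega] at hright
  exact ⟨hleft, hright⟩

lemma card_mul_card_add_one_le_two_mul_sum (s : Finset ℕ) (hs : ∀ x ∈ s, 0 < x) :
    #s * (#s + 1) ≤ 2 * ∑ x ∈ s, x := by
  induction s using Finset.induction_on_max with
  | empty => simp
  | insert a s hlt ih =>
    have ha : a ∉ s := fun h => lt_irrefl a (hlt a h)
    have hcard : #s + 1 ≤ a := by
      have : #s ≤ #(Ioo 0 a) := card_le_card fun x hx =>
        mem_Ioo.mpr ⟨hs x (mem_insert_of_mem hx), hlt x hx⟩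
      rw [Nat.card_Ioo] at this
      have := hs a (mem_insert_self a s)
      omega
    have := ih fun x hx => hs x (mem_insert_of_mem hx)
    rw [sum_insert ha, card_insert_of_notMem ha]
    nlinarith

lemma card_filter_mem_Icc_le_card {ι : Type*} (hQ : Q.Nonempty) (T : Finset ι)
    (startPos endPos : ι → ℕ) (hlmc : ∀ t ∈ T, LeftMinCooc n S Q (startPos t) (endPos t))
    (hstart : Set.InjOn startPos T) (p : ℕ) :
    #{t ∈ T | p ∈ Icc (startPos t) (endPos t)} ≤ #Q := by
  refine card_le_card_of_injOn (fun t => S (startPos t))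
    (fun t ht => ((hlmc t (mem_filter.mp ht).1).start_mem_and_not_repeat hQ).1) ?_
  intro t ht t' ht' hS
  simp only [coe_filter, Set.mem_ofPred_eq, mem_Icc] at ht ht' hS
  refine hstart ht.1 ht'.1 ?_
  by_contra hne
  rcases Nat.lt_or_gt_of_ne hne with hlt | hlt
  · exact ((hlmc t ht.1).start_mem_and_not_repeat hQ).2 _ hlt (by omega) hS.symm
  · exact ((hlmc t' ht'.1).start_mem_and_not_repeat hQ).2 _ hlt (by omega) hS

lemma sum_card_Icc_le {ι : Type*} (hQ : Q.Nonempty) (T : Finset ι) (startPos endPos : ι → ℕ)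
    (hlmc : ∀ t ∈ T, LeftMinCooc n S Q (startPos t) (endPos t)) (hstart : Set.InjOn startPos T) :
    ∑ t ∈ T, #(Icc (startPos t) (endPos t)) ≤ n * #Q := by
  classical
  let r : ι → ℕ → Prop := fun t p => p ∈ Icc (startPos t) (endPos t)
  calc ∑ t ∈ T, #(Icc (startPos t) (endPos t))
      = ∑ t ∈ T, #((Icc 1 n).bipartiteAbove r t) := by
        refine sum_congr rfl fun t ht => ?_
        obtain ⟨⟨hi, -, hjn, -⟩, -⟩ := hlmc t ht
        rw [bipartiteAbove, filter_mem_eq_inter, inter_eq_right.mpr (Icc_subset_Icc hi hjn)]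
    _ = ∑ p ∈ Icc 1 n, #(T.bipartiteBelow r p) :=
        sum_card_bipartiteAbove_eq_sum_card_bipartiteBelow r
    _ ≤ ∑ _p ∈ Icc 1 n, #Q :=
        sum_le_sum fun p _ => card_filter_mem_Icc_le_card hQ T startPos endPos hlmc hstart p
    _ = n * #Q := by rw [sum_const, Nat.card_Icc, smul_eq_mul, Nat.add_sub_cancel]

lemma card_mul_card_add_one_le {ι : Type*} (hQ : Q.Nonempty) (T : Finset ι)
    (startPos endPos : ι → ℕ) (hlmc : ∀ t ∈ T, LeftMinCooc n S Q (startPos t) (endPos t))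
    (hstart : Set.InjOn startPos T) (hlen : Set.InjOn (fun t => endPos t - startPos t) T) :
    #T * (#T + 1) ≤ 2 * (n * #Q) := by
  classical
  have hlen' : Set.InjOn (fun t => #(Icc (startPos t) (endPos t))) T := by
    intro t ht t' ht' h
    have := (hlmc t ht).1.2.1
    have := (hlmc t' ht').1.2.1
    simp only [Nat.card_Icc] at h
    exact hlen ht ht' (by simp only; omega)
  have hdistinct := card_mul_card_add_one_le_two_mul_sum
    (T.image fun t => #(Icc (startPos t) (endPos t))) (by simpa using fun t ht => (hlmc t ht).1.2.1)
  rw [card_image_of_injOn hlen', sum_image hlen'] at hdistinct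
  exact hdistinct.trans (Nat.mul_le_mul_left 2 (sum_card_Icc_le hQ T startPos endPos hlmc hstart))

lemma card_mul_card_add_one_le_of_left_ends {ι : Type*} (hQ : Q.Nonempty) (T : Finset ι)
    (startPos endPos : ι → ℕ)
    (hend : ∀ t ∈ T, LeftMinCooc n S Q (startPos t) (endPos t) ∧
      ¬ LeftMinCooc n S Q (startPos t) (endPos t - 1))
    (hlen : Set.InjOn (fun t => endPos t - startPos t) T) :
    #T * (#T + 1) ≤ 2 * (n * #Q) := by
  refine card_mul_card_add_one_le hQ T startPos endPos (fun t ht => (hend t ht).1) ?_ hlen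
  intro t ht t' ht' h
  have hsame := (hend t ht).1.eq_of_not_pred (hend t ht).2
    (h ▸ (hend t' ht').1) (h ▸ (hend t' ht').2)
  exact hlen ht ht' (by simp only [h, hsame])

lemma card_mul_card_add_one_le_of_right_ends {ι : Type*} (hQ : Q.Nonempty) (T : Finset ι)
    (startPos endPos : ι → ℕ)
    (hend : ∀ t ∈ T, LeftMinCooc n S Q (startPos t) (endPos t) ∧
      ¬ LeftMinCooc n S Q (startPos t) (endPos t + 1))
    (hlen : Set.InjOn (fun t => endPos t - startPos t) T) :
    #T * (#T + 1) ≤ 2 * (n * #Q) := by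
  refine card_mul_card_add_one_le hQ T startPos endPos (fun t ht => (hend t ht).1) ?_ hlen
  intro t ht t' ht' h
  have hsame := (hend t ht).1.eq_of_not_succ (hend t ht).2
    (h ▸ (hend t' ht').1) (h ▸ (hend t' ht').2)
  exact hlen ht ht' (by simp only [h, hsame])

lemma le_sqrt_two_mul_sqrt {k : ℕ} {x : ℝ} (h : (k * (k + 1) : ℝ) ≤ 2 * x) :
    (k : ℝ) ≤ √2 * √x := by
  rw [← Real.sqrt_mul zero_le_two]
  exact Real.le_sqrt_of_sq_le (by nlinarith)

theorem stmt12 :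
    ∃ c : ℝ, 0 < c ∧
      ∀ (α : Type) (n : ℕ) (S : ℕ → α) (Q : Finset α), 2 ≤ Q.card →
        (((Finset.Icc 2 n).filter
            (fun i => lmco n S Q i ≠ lmco n S Q (i-1))).card : ℝ) ≤
          c * Real.sqrt (n * Q.card) := by
  refine ⟨2 * √2, by positivity, fun α n S Q hq => ?_⟩
  classical
  have hQ : Q.Nonempty := card_pos.mp (by omega)
  set D := (Icc 2 n).filter fun i => lmco n S Q i ≠ lmco n S Q (i - 1)
  have hD : ∀ w ∈ D, 2 ≤ w := fun w hw => (mem_Icc.mp (mem_filter.mp hw).1).1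
  choose! g hg using fun w hw => exists_end_of_lmco_ne (hD w hw) (mem_filter.mp hw).2
  set A := D.filter fun w => LeftMinCooc n S Q (g w) (g w + (w - 1)) ∧
    ¬ LeftMinCooc n S Q (g w) (g w + (w - 1) - 1)
  set B := D.filter fun w => LeftMinCooc n S Q (g w) (g w + (w - 2)) ∧
    ¬ LeftMinCooc n S Q (g w) (g w + (w - 2) + 1)
  have hA := card_mul_card_add_one_le_of_left_ends hQ A g (fun w => g w + (w - 1))
    (fun w hw => (mem_filter.mp hw).2) fun w hw w' hw' h => by
      have := hD w (mem_filter.mp hw).1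
      have := hD w' (mem_filter.mp hw').1
      simp only at h
      omega
  have hB := card_mul_card_add_one_le_of_right_ends hQ B g (fun w => g w + (w - 2))
    (fun w hw => (mem_filter.mp hw).2) fun w hw w' hw' h => by
      have := hD w (mem_filter.mp hw).1
      have := hD w' (mem_filter.mp hw').1
      simp only at h
      omega
  have hDAB : #D ≤ #A + #B := (card_le_card fun w hw => mem_union.mpr
    ((hg w hw).imp (mem_filter.mpr ⟨hw, ·⟩) (mem_filter.mpr ⟨hw, ·⟩))).trans (card_union_le A B)
  calc (#D : ℝ) ≤ #A + #B := by exact_mod_cast hDAB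
    _ ≤ √2 * √(n * #Q) + √2 * √(n * #Q) :=
        add_le_add (le_sqrt_two_mul_sqrt (by exact_mod_cast hA))
          (le_sqrt_two_mul_sqrt (by exact_mod_cast hB))
    _ = 2 * √2 * √(n * #Q) := by ring
end

section
/- Predecessor reduction correctness: let X = {x₁ < ... < x_m} ⊆ [2,u], and let S be the concatenation of x₁ copies of G_{x₁}, then x₂−x₁ copies of G_{x₂}, ..., then x_m−x_{m−1} copies of G_{x_m}, where G_i = A·$^{i−2}·B·$^{u} and Q = {A,B}. Then for every x ∈ [2,u]: lmco-prefix-sum ∑_{i=2}^{x} δ(i) equals the predecessor of x in X (the largest element of X that is ≤ x) if one exists, and equals 0 if x < x₁. -/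
/-!
Read `S` as the concatenation of gadgets `G_g`, one for each entry `g` of the list
`x₁, …, x₁, x₂, …, x₂, …` in which `x_j` is repeated `x_j - x_{j-1}` times. Gadget `t`,
starting at offset `s_t`, carries its `A` at `s_t + 1` and its `B` at `s_t + g_t`, and the next
gadget starts at `s_t + g_t + u`. For a window length `w ≤ u` the `$`-padding makes every window
starting inside gadget `t` end before the next `A`. So a window starting at a `B` contains no
`A`, and a window starting at the `A` of gadget `t` contains a `B` iff `g_t ≤ w`, and then no
other `A`. Hence `lmco w` is the number of gadgets of size at most `w`; in particular
`lmco 1 = 0`, and the telescoping sum `∑_{i=2}^{v} δ(i) = lmco v` counts the gadgets of size at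
most `v`. These are the `x₁ + (x₂ - x₁) + ⋯ + (x_j - x_{j-1}) = x_j` copies for the predecessor
`x_j` of `v`, and none if `v < x₁`.
-/

open Finset

/-- The increment gadget `G_i = A · $^{i-2} · B · $^{u}` (with `$` written `D`). -/
def Gadget {α : Type*} (A B D : α) (u i : ℕ) : List α :=
  A :: (List.replicate (i - 2) D ++ B :: List.replicate u D)

/-- Concatenation of `c 1` copies of `G_{e 1}`, then `c 2` copies of `G_{e 2}`, …,
then `c m` copies of `G_{e m}`. -/
def GadgetString {α : Type*} (A B D : α) (u m : ℕ) (e c : ℕ → ℕ) : List α :=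
  ((List.range m).map (fun j => (List.replicate (c (j+1)) (Gadget A B D u (e (j+1)))).flatten)).flatten

lemma LeftMinCooc.exists_mem_forall_ne {α : Type*} {n : ℕ} {S : ℕ → α} {Q : Finset α}
    {i j : ℕ} (hQ : Q.Nonempty) (h : LeftMinCooc n S Q i j) :
    ∃ c ∈ Q, S i = c ∧ ∀ k, i < k → k ≤ j → S k ≠ c := by
  obtain ⟨⟨-, -, hj, hocc⟩, hnot⟩ := h
  by_contra! hrecur
  have hocc' : ∀ c ∈ Q, ∃ k, i + 1 ≤ k ∧ k ≤ j ∧ S k = c := by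
    intro c hc
    obtain ⟨k, hik, hkj, hk⟩ := hocc c hc
    rcases hik.eq_or_lt with rfl | hlt
    · exact hrecur c hc hk
    · exact ⟨k, hlt, hkj, hk⟩
  obtain ⟨k, hik, hkj, -⟩ := hocc' _ hQ.choose_spec
  exact hnot ⟨by omega, by omega, hj, hocc'⟩

lemma sum_Icc_dlt {α : Type*} (n : ℕ) (S : ℕ → α) (Q : Finset α) {v : ℕ} (hv : 1 ≤ v) :
    ∑ i ∈ Icc 2 v, dlt n S Q i = lmco n S Q v - lmco n S Q 1 := by
  calc ∑ i ∈ Icc 2 v, dlt n S Q i = ∑ i ∈ Ico (1 + 1) (v + 1), dlt n S Q i := rfl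
    _ = ∑ i ∈ Ico 1 v, dlt n S Q (i + 1) := (sum_Ico_add' _ _ _ _).symm
    _ = lmco n S Q v - lmco n S Q 1 := by
      simp only [dlt, Nat.add_sub_cancel]
      exact sum_Ico_sub (fun i => (lmco n S Q i : ℤ)) hv

lemma List.countP_eq_card_filter_range {β : Type*} (l : List β) (d : β) (p : β → Bool) :
    l.countP p = #{t ∈ Finset.range l.length | p (l.getD t d)} := by
  induction l with
  | nil => simp
  | cons b l ih =>
    rw [List.countP_cons, ih, card_filter, card_filter, List.length_cons, Finset.sum_range_succ']
    simp only [List.getD_cons_succ, List.getD_cons_zero]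

lemma sum_range_increments {x : ℕ → ℕ} {J : ℕ} (hJ : 1 ≤ J)
    (hmono : ∀ j, 1 ≤ j → j < J → x j ≤ x (j + 1)) :
    ∑ j ∈ range J, (fun j => if j = 1 then x 1 else x j - x (j - 1)) (j + 1) = x J := by
  induction J, hJ using Nat.le_induction with
  | base => simp
  | succ J hJ ih =>
    rw [sum_range_succ, ih fun j h1 h2 => hmono j h1 (by omega)]
    have := hmono J hJ (by omega)
    beta_reduce
    rw [if_neg (by omega : J + 1 ≠ 1), Nat.add_sub_cancel]
    omega

section Gadgets

variable {α : Type*} (A B D : α) (u : ℕ)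

lemma length_gadget {g : ℕ} (hg : 2 ≤ g) : (Gadget A B D u g).length = g + u := by
  simp only [Gadget, List.length_cons, List.length_append, List.length_replicate]
  omega

lemma gadget_getD {g : ℕ} (hg : 2 ≤ g) (r : ℕ) :
    (Gadget A B D u g).getD r D = if r = 0 then A else if r + 1 = g then B else D := by
  rcases r with _ | r
  · simp [Gadget]
  · simp only [Gadget, List.getD_eq_getElem?_getD, List.getElem?_append,
      List.getElem?_replicate, List.length_replicate, List.getElem?_cons]
    grind

variable {A B D} {g : ℕ}

lemma gadget_getD_eq_left_iff (hg : 2 ≤ g) (hAB : A ≠ B) (hAD : A ≠ D) (r : ℕ) :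
    (Gadget A B D u g).getD r D = A ↔ r = 0 := by
  rw [gadget_getD A B D u hg]
  split_ifs <;> grind

lemma gadget_getD_eq_right_iff (hg : 2 ≤ g) (hAB : A ≠ B) (hBD : B ≠ D) (r : ℕ) :
    (Gadget A B D u g).getD r D = B ↔ r + 1 = g := by
  rw [gadget_getD A B D u hg]
  split_ifs <;> grind

end Gadgets

section GadgetConcat

variable {α : Type*} (A B D : α) (u : ℕ)

def gadgetConcat (gs : List ℕ) : List α := (gs.map (Gadget A B D u)).flatten

/-- Index in `gadgetConcat` at which gadget `t` starts. It is 0-based, whereas the strings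
fed to `lmco` are read 1-based, so the `A` of gadget `t` sits at position
`gadgetOffset u gs t + 1`. -/
def gadgetOffset (gs : List ℕ) (t : ℕ) : ℕ := ((gs.take t).map (· + u)).sum

variable {gs : List ℕ}

lemma length_gadgetConcat (hgs : ∀ g ∈ gs, 2 ≤ g) :
    (gadgetConcat A B D u gs).length = (gs.map (· + u)).sum := by
  induction gs with
  | nil => rfl
  | cons g gs ih =>
    simp only [gadgetConcat, List.map_cons, List.flatten_cons, List.length_append, List.sum_cons]
    rw [length_gadget A B D u (hgs g (by simp))]
    exact congrArg _ (ih fun g' hg' => hgs g' (by simp [hg']))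

lemma gadgetOffset_eq_length (hgs : ∀ g ∈ gs, 2 ≤ g) (t : ℕ) :
    gadgetOffset u gs t = (gadgetConcat A B D u (gs.take t)).length :=
  (length_gadgetConcat A B D u fun g hg => hgs g (List.mem_of_mem_take hg)).symm

lemma gadgetOffset_length : gadgetOffset u gs gs.length = (gs.map (· + u)).sum := by
  simp [gadgetOffset]

lemma gadgetOffset_succ {t : ℕ} (ht : t < gs.length) :
    gadgetOffset u gs (t + 1) = gadgetOffset u gs t + (gs.getD t 0 + u) := by
  simp only [gadgetOffset, List.take_add_one, List.getElem?_eq_getElem ht, Option.toList_some,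
    List.map_append, List.sum_append, List.map_singleton, List.sum_singleton,
    List.getD_eq_getElem _ _ ht]

lemma gadgetOffset_mono : Monotone (gadgetOffset u gs) := fun _ _ h =>
  ((List.take_prefix_take_left h).sublist.map _).sum_le_sum fun _ _ => Nat.zero_le _

lemma gadgetOffset_add_le {t t' : ℕ} (htt' : t < t') (ht : t < gs.length) :
    gadgetOffset u gs t + (gs.getD t 0 + u) ≤ gadgetOffset u gs t' :=
  gadgetOffset_succ u ht ▸ gadgetOffset_mono u htt'

lemma eq_of_gadgetOffset_add_eq {t t' r r' : ℕ} (ht : t < gs.length) (ht' : t' < gs.length)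
    (hr : r < gs.getD t 0 + u) (hr' : r' < gs.getD t' 0 + u)
    (h : gadgetOffset u gs t + r = gadgetOffset u gs t' + r') : t = t' := by
  rcases lt_trichotomy t t' with htt' | htt' | htt'
  · have := gadgetOffset_add_le u htt' ht; omega
  · exact htt'
  · have := gadgetOffset_add_le u htt' ht'; omega

lemma exists_mem_gadget_block {k : ℕ} (hk : k < gadgetOffset u gs gs.length) :
    ∃ t < gs.length,
      gadgetOffset u gs t ≤ k ∧ k < gadgetOffset u gs t + (gs.getD t 0 + u) := by
  induction gs generalizing k with
  | nil => simp [gadgetOffset] at hk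
  | cons g gs ih =>
    by_cases hkg : k < g + u
    · exact ⟨0, by simp, by simp [gadgetOffset], by simpa [gadgetOffset] using hkg⟩
    · have hk' : k - (g + u) < gadgetOffset u gs gs.length := by
        rw [gadgetOffset_length] at hk ⊢
        simp only [List.map_cons, List.sum_cons] at hk
        omega
      obtain ⟨t, ht, h1, h2⟩ := ih hk'
      refine ⟨t + 1, by simpa using ht, ?_⟩
      simp only [gadgetOffset, List.take_succ_cons, List.map_cons, List.sum_cons,
        List.getD_cons_succ] at h1 h2 ⊢
      omega

end GadgetConcat

section Positions

variable {α : Type*} {A B D : α} {u : ℕ} {gs : List ℕ}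

lemma two_le_getD (hgs : ∀ g ∈ gs, 2 ≤ g) {t : ℕ} (ht : t < gs.length) :
    2 ≤ gs.getD t 0 :=
  List.getD_eq_getElem gs 0 ht ▸ hgs _ (List.getElem_mem ht)

lemma gadgetConcat_getD_offset_add (hgs : ∀ g ∈ gs, 2 ≤ g) {t r : ℕ} (ht : t < gs.length)
    (hr : r < gs.getD t 0 + u) :
    (gadgetConcat A B D u gs).getD (gadgetOffset u gs t + r) D
      = (Gadget A B D u (gs.getD t 0)).getD r D := by
  have hsplit : gadgetConcat A B D u gs = gadgetConcat A B D u (gs.take t) ++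
      (Gadget A B D u (gs.getD t 0) ++ gadgetConcat A B D u (gs.drop (t + 1))) := by
    have hgs_split : gs = gs.take t ++ gs[t] :: gs.drop (t + 1) := by
      rw [← List.drop_eq_getElem_cons ht, List.take_append_drop]
    conv_lhs => rw [hgs_split]
    simp only [gadgetConcat, List.map_append, List.map_cons, List.flatten_append,
      List.flatten_cons, List.getD_eq_getElem _ _ ht]
  rw [hsplit, gadgetOffset_eq_length A B D u hgs, List.getD_append_right _ _ _ _ (by omega),
    Nat.add_sub_cancel_left,
    List.getD_append _ _ _ _ (by rwa [length_gadget A B D u (two_le_getD hgs ht)])]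

lemma gadgetConcat_getD_eq_iff (hgs : ∀ g ∈ gs, 2 ≤ g) {c : α} (hc : c ≠ D) (k : ℕ) :
    (gadgetConcat A B D u gs).getD k D = c ↔ ∃ t < gs.length, ∃ r < gs.getD t 0 + u,
      k = gadgetOffset u gs t + r ∧ (Gadget A B D u (gs.getD t 0)).getD r D = c := by
  constructor
  · intro hk
    have hklt : k < gadgetOffset u gs gs.length := by
      by_contra! hge
      rw [gadgetOffset_length, ← length_gadgetConcat A B D u hgs] at hge
      exact hc (hk ▸ List.getD_eq_default _ _ hge)
    obtain ⟨t, ht, h1, h2⟩ := exists_mem_gadget_block u hklt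
    refine ⟨t, ht, k - gadgetOffset u gs t, by omega, by omega, ?_⟩
    rwa [← gadgetConcat_getD_offset_add hgs ht (by omega), Nat.add_sub_cancel' h1]
  · rintro ⟨t, ht, r, hr, rfl, hc⟩
    rwa [gadgetConcat_getD_offset_add hgs ht hr]

lemma gadgetConcat_getD_pred_eq_left_iff (hAB : A ≠ B) (hAD : A ≠ D)
    (hgs : ∀ g ∈ gs, 2 ≤ g) {k : ℕ} (hk : 1 ≤ k) :
    (gadgetConcat A B D u gs).getD (k - 1) D = A ↔
      ∃ t < gs.length, k = gadgetOffset u gs t + 1 := by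
  rw [gadgetConcat_getD_eq_iff hgs hAD]
  refine exists_congr fun t => and_congr_right fun ht => ?_
  have hg := two_le_getD hgs ht
  simp_rw [gadget_getD_eq_left_iff u hg hAB hAD]
  constructor
  · rintro ⟨r, -, hkr, rfl⟩; omega
  · intro hkt; exact ⟨0, by omega, by omega, rfl⟩

lemma gadgetConcat_getD_pred_eq_right_iff (hAB : A ≠ B) (hBD : B ≠ D)
    (hgs : ∀ g ∈ gs, 2 ≤ g) {k : ℕ} (hk : 1 ≤ k) :
    (gadgetConcat A B D u gs).getD (k - 1) D = B ↔
      ∃ t < gs.length, k = gadgetOffset u gs t + gs.getD t 0 := by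
  rw [gadgetConcat_getD_eq_iff hgs hBD]
  refine exists_congr fun t => and_congr_right fun ht => ?_
  have hg := two_le_getD hgs ht
  simp_rw [gadget_getD_eq_right_iff u hg hAB hBD]
  constructor
  · rintro ⟨r, -, hkr, hr⟩; omega
  · intro hkt; exact ⟨gs.getD t 0 - 1, by omega, by omega, by omega⟩

end Positions

section LeftMinimal

variable {α : Type*} [DecidableEq α] {A B D : α} {u w : ℕ} {gs : List ℕ}

lemma LeftMinCooc.exists_eq_gadgetOffset (hAB : A ≠ B) (hAD : A ≠ D) (hBD : B ≠ D)
    (hgs : ∀ g ∈ gs, 2 ≤ g) (hw : w ≤ u) {i j : ℕ}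
    (h : LeftMinCooc (gadgetConcat A B D u gs).length
      (fun k => (gadgetConcat A B D u gs).getD (k - 1) D) {A, B} i j) (hij : j - i + 1 = w) :
    ∃ t < gs.length, gs.getD t 0 ≤ w ∧ i = gadgetOffset u gs t + 1 ∧
      j = gadgetOffset u gs t + w := by
  obtain ⟨hi, -, -, hocc⟩ := h.1
  obtain ⟨c, hc, hSi, -⟩ := h.exists_mem_forall_ne (insert_nonempty A {B})
  rcases mem_insert.mp hc with rfl | hc
  · -- the window lies inside gadget `t`, so its `B` is the `B` of gadget `t`
    obtain ⟨t, ht, rfl⟩ := (gadgetConcat_getD_pred_eq_left_iff hAB hAD hgs hi).mp hSi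
    obtain ⟨kB, hkB1, hkB2, hkB⟩ := hocc B (by simp)
    obtain ⟨t', ht', rfl⟩ := (gadgetConcat_getD_pred_eq_right_iff hAB hBD hgs (by omega)).mp hkB
    have hg' := two_le_getD hgs ht'
    obtain rfl := eq_of_gadgetOffset_add_eq u ht ht'
      (r := gadgetOffset u gs t' + gs.getD t' 0 - 1 - gadgetOffset u gs t)
      (r' := gs.getD t' 0 - 1) (by omega) (by omega) (by omega)
    exact ⟨t, ht, by omega, rfl, by omega⟩
  · -- a window starting at the `B` of gadget `t` ends before the `A` of gadget `t + 1`
    rw [mem_singleton] at hc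
    subst hc
    obtain ⟨t, ht, rfl⟩ := (gadgetConcat_getD_pred_eq_right_iff hAB hBD hgs hi).mp hSi
    obtain ⟨kA, hkA1, hkA2, hkA⟩ := hocc A (by simp)
    obtain ⟨t', ht', rfl⟩ := (gadgetConcat_getD_pred_eq_left_iff hAB hAD hgs (by omega)).mp hkA
    have hg := two_le_getD hgs ht
    obtain rfl := eq_of_gadgetOffset_add_eq u ht ht'
      (r := gadgetOffset u gs t' - gadgetOffset u gs t) (r' := 0) (by omega) (by omega) (by omega)
    omega

lemma leftMinCooc_gadgetOffset (hAB : A ≠ B) (hAD : A ≠ D) (hBD : B ≠ D)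
    (hgs : ∀ g ∈ gs, 2 ≤ g) (hw : w ≤ u) {t : ℕ} (ht : t < gs.length)
    (hgw : gs.getD t 0 ≤ w) :
    LeftMinCooc (gadgetConcat A B D u gs).length
      (fun k => (gadgetConcat A B D u gs).getD (k - 1) D) {A, B}
      (gadgetOffset u gs t + 1) (gadgetOffset u gs t + w) := by
  have hg := two_le_getD hgs ht
  have hnext := gadgetOffset_add_le u (Nat.lt_add_one t) ht
  have hlast := gadgetOffset_mono u (gs := gs) (show t + 1 ≤ gs.length from ht)
  have hlen : (gadgetConcat A B D u gs).length = gadgetOffset u gs gs.length := by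
    rw [length_gadgetConcat A B D u hgs, gadgetOffset_length]
  refine ⟨⟨by omega, by omega, by omega, fun c hc => ?_⟩, ?_⟩
  · rcases mem_insert.mp hc with rfl | hc
    · exact ⟨_, le_rfl, by omega,
        (gadgetConcat_getD_pred_eq_left_iff hAB hAD hgs (by omega)).mpr ⟨t, ht, rfl⟩⟩
    · rw [mem_singleton] at hc
      subst hc
      exact ⟨_, by omega, by omega,
        (gadgetConcat_getD_pred_eq_right_iff hAB hBD hgs (by omega)).mpr ⟨t, ht, rfl⟩⟩
  · rintro ⟨-, -, -, hocc⟩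
    obtain ⟨kA, hkA1, hkA2, hkA⟩ := hocc A (by simp)
    obtain ⟨t', ht', rfl⟩ := (gadgetConcat_getD_pred_eq_left_iff hAB hAD hgs (by omega)).mp hkA
    obtain rfl := eq_of_gadgetOffset_add_eq u ht ht'
      (r := gadgetOffset u gs t' - gadgetOffset u gs t) (r' := 0) (by omega) (by omega) (by omega)
    omega

theorem lmco_gadgetConcat (hAB : A ≠ B) (hAD : A ≠ D) (hBD : B ≠ D)
    (hgs : ∀ g ∈ gs, 2 ≤ g) (hw : w ≤ u) :
    lmco (gadgetConcat A B D u gs).length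
        (fun k => (gadgetConcat A B D u gs).getD (k - 1) D) {A, B} w = gs.countP (· ≤ w) := by
  set T : Finset ℕ := {t ∈ range gs.length | gs.getD t 0 ≤ w}
  have hset : {p : ℕ × ℕ | LeftMinCooc (gadgetConcat A B D u gs).length
        (fun k => (gadgetConcat A B D u gs).getD (k - 1) D) {A, B} p.1 p.2 ∧ p.2 - p.1 + 1 = w}
      = (fun t => (gadgetOffset u gs t + 1, gadgetOffset u gs t + w)) '' T := by
    ext ⟨i, j⟩
    simp only [Set.mem_ofPred_eq, T, Set.mem_image, coe_filter, mem_range, Prod.mk.injEq]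
    constructor
    · rintro ⟨h, hij⟩
      obtain ⟨t, ht, hgw, rfl, rfl⟩ := h.exists_eq_gadgetOffset hAB hAD hBD hgs hw hij
      exact ⟨t, ⟨ht, hgw⟩, rfl, rfl⟩
    · rintro ⟨t, ⟨ht, hgw⟩, rfl, rfl⟩
      have := two_le_getD hgs ht
      exact ⟨leftMinCooc_gadgetOffset hAB hAD hBD hgs hw ht hgw, by omega⟩
  have hinj : Set.InjOn (fun t => (gadgetOffset u gs t + 1, gadgetOffset u gs t + w)) T := by
    intro t ht t' ht' h
    simp only [T, coe_filter, mem_range, Set.mem_ofPred_eq, Prod.mk.injEq] at ht ht' h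
    have := two_le_getD hgs ht.1
    have := two_le_getD hgs ht'.1
    exact eq_of_gadgetOffset_add_eq u ht.1 ht'.1 (r := 0) (r' := 0) (by omega) (by omega)
      (by omega)
  rw [lmco, hset, hinj.ncard_image, Set.ncard_coe_finset, List.countP_eq_card_filter_range gs 0]
  simp only [T, decide_eq_true_eq]

end LeftMinimal

def gadgetSizes (m : ℕ) (e c : ℕ → ℕ) : List ℕ :=
  ((List.range m).map fun j => List.replicate (c (j + 1)) (e (j + 1))).flatten

section GadgetSizes

variable {m : ℕ} {e c : ℕ → ℕ}

lemma gadgetString_eq_gadgetConcat {α : Type*} (A B D : α) (u : ℕ) :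
    GadgetString A B D u m e c = gadgetConcat A B D u (gadgetSizes m e c) := by
  simp [GadgetString, gadgetConcat, gadgetSizes, List.map_flatten, List.flatten_flatten,
    Function.comp_def]

lemma mem_gadgetSizes {g : ℕ} (hg : g ∈ gadgetSizes m e c) : ∃ j ∈ Icc 1 m, e j = g := by
  simp only [gadgetSizes, List.mem_flatten, List.mem_map, List.mem_range] at hg
  obtain ⟨_, ⟨j, hj, rfl⟩, hg⟩ := hg
  exact ⟨j + 1, mem_Icc.mpr ⟨by omega, hj⟩, (List.eq_of_mem_replicate hg).symm⟩

lemma length_gadgetSizes : (gadgetSizes m e c).length = ∑ j ∈ range m, c (j + 1) := by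
  simp only [gadgetSizes, List.length_flatten, List.map_map, Function.comp_def,
    List.length_replicate]
  rfl

lemma gadgetSizes_add (m' : ℕ) :
    gadgetSizes (m + m') e c
      = gadgetSizes m e c ++ gadgetSizes m' (fun j => e (m + j)) (fun j => c (m + j)) := by
  simp [gadgetSizes, List.range_add, Function.comp_def, add_assoc]

lemma countP_gadgetSizes_eq_zero {v : ℕ} (h : ∀ j ∈ Icc 1 m, v < e j) :
    (gadgetSizes m e c).countP (· ≤ v) = 0 := by
  refine List.countP_eq_zero.mpr fun g hg => ?_
  obtain ⟨j, hj, rfl⟩ := mem_gadgetSizes hg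
  simpa using h j hj

lemma countP_gadgetSizes_eq_sum {j v : ℕ} (hjm : j ≤ m) (hle : ∀ i ∈ Icc 1 j, e i ≤ v)
    (hgt : ∀ i ∈ Icc (j + 1) m, v < e i) :
    (gadgetSizes m e c).countP (· ≤ v) = ∑ i ∈ range j, c (i + 1) := by
  obtain ⟨m', rfl⟩ := Nat.exists_eq_add_of_le hjm
  have hfirst : (gadgetSizes j e c).countP (· ≤ v) = (gadgetSizes j e c).length := by
    refine List.countP_eq_length.mpr fun g hg => ?_
    obtain ⟨i, hi, rfl⟩ := mem_gadgetSizes hg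
    simpa using hle i hi
  have hrest : (gadgetSizes m' (fun i => e (j + i)) (fun i => c (j + i))).countP (· ≤ v) = 0 :=
    countP_gadgetSizes_eq_zero fun i hi => hgt (j + i) (by simp only [mem_Icc] at hi ⊢; omega)
  rw [gadgetSizes_add, List.countP_append, hfirst, hrest, add_zero, length_gadgetSizes]

end GadgetSizes

lemma countP_gadgetSizes_increments {x : ℕ → ℕ} {m j v : ℕ}
    (hx : StrictMonoOn x (Set.Icc 1 m)) (hj : j ∈ Icc 1 m) (hxj : x j ≤ v)
    (hmax : ∀ i ∈ Icc 1 m, x i ≤ v → x i ≤ x j) :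
    (gadgetSizes m x fun j => if j = 1 then x 1 else x j - x (j - 1)).countP (· ≤ v) = x j := by
  rw [mem_Icc] at hj
  rw [countP_gadgetSizes_eq_sum hj.2, sum_range_increments hj.1]
  · exact fun i h1 h2 => hx.monotoneOn ⟨h1, by omega⟩ ⟨by omega, by omega⟩ (by omega)
  · intro i hi
    rw [mem_Icc] at hi
    exact (hx.monotoneOn ⟨hi.1, by omega⟩ hj hi.2).trans hxj
  · intro i hi
    rw [mem_Icc] at hi
    by_contra! hxi
    have := hx hj ⟨by omega, hi.2⟩ hi.1
    have := hmax i (mem_Icc.mpr ⟨by omega, hi.2⟩) hxi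
    omega

theorem stmt18_general {α : Type*} [DecidableEq α] (A B D : α)
    (hAB : A ≠ B) (hAD : A ≠ D) (hBD : B ≠ D)
    (u m : ℕ) (x : ℕ → ℕ)
    (hx : ∀ j ∈ Finset.Icc 1 m, x j ∈ Finset.Icc 2 u)
    (hmono : ∀ i ∈ Finset.Icc 1 m, ∀ j ∈ Finset.Icc 1 m, i < j → x i < x j) :
    ∀ v ∈ Finset.Icc 2 u,
      (v < x 1 →
        ∑ i ∈ Finset.Icc 2 v,
          dlt (GadgetString A B D u m x (fun j => if j = 1 then x 1 else x j - x (j-1))).length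
            (fun k => (GadgetString A B D u m x
                (fun j => if j = 1 then x 1 else x j - x (j-1))).getD (k-1) D)
            ({A, B} : Finset α) i = 0) ∧
      (∀ j ∈ Finset.Icc 1 m, x j ≤ v →
        (∀ j' ∈ Finset.Icc 1 m, x j' ≤ v → x j' ≤ x j) →
        ∑ i ∈ Finset.Icc 2 v,
          dlt (GadgetString A B D u m x (fun j => if j = 1 then x 1 else x j - x (j-1))).length
            (fun k => (GadgetString A B D u m x
                (fun j => if j = 1 then x 1 else x j - x (j-1))).getD (k-1) D)
            ({A, B} : Finset α) i = (x j : ℤ)) := by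
  intro v hv
  rw [mem_Icc] at hv
  set c : ℕ → ℕ := fun j => if j = 1 then x 1 else x j - x (j - 1)
  have hgs : ∀ g ∈ gadgetSizes m x c, 2 ≤ g := fun g hg => by
    obtain ⟨j, hj, rfl⟩ := mem_gadgetSizes hg
    exact (mem_Icc.mp (hx j hj)).1
  have hsum : ∑ i ∈ Icc 2 v, dlt (GadgetString A B D u m x c).length
      (fun k => (GadgetString A B D u m x c).getD (k - 1) D) {A, B} i
        = (gadgetSizes m x c).countP (· ≤ v) := by
    rw [gadgetString_eq_gadgetConcat, sum_Icc_dlt _ _ _ (by omega),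
      lmco_gadgetConcat hAB hAD hBD hgs hv.2, lmco_gadgetConcat hAB hAD hBD hgs (by omega),
      countP_gadgetSizes_eq_zero (v := 1) fun j hj => (mem_Icc.mp (hx j hj)).1, Nat.cast_zero,
      sub_zero]
  have hx_mono : StrictMonoOn x (Set.Icc 1 m) := fun i hi j hj =>
    hmono i (by simpa using hi) j (by simpa using hj)
  rw [hsum]
  refine ⟨fun hv1 => ?_, fun j hj hxj hmax => ?_⟩
  · rw [countP_gadgetSizes_eq_zero fun i hi => ?_, Nat.cast_zero]
    rw [mem_Icc] at hi
    have := hx_mono.monotoneOn ⟨le_rfl, hi.1.trans hi.2⟩ hi hi.1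
    omega
  · rw [countP_gadgetSizes_increments hx_mono hj hxj hmax]

theorem stmt18 {α : Type*} [DecidableEq α] (A B D : α)
    (hAB : A ≠ B) (hAD : A ≠ D) (hBD : B ≠ D)
    (u m : ℕ) (hu : 2 ≤ u) (hm : 1 ≤ m) (x : ℕ → ℕ)
    (hx : ∀ j ∈ Finset.Icc 1 m, x j ∈ Finset.Icc 2 u)
    (hmono : ∀ i ∈ Finset.Icc 1 m, ∀ j ∈ Finset.Icc 1 m, i < j → x i < x j) :
    ∀ v ∈ Finset.Icc 2 u,
      (v < x 1 →
        ∑ i ∈ Finset.Icc 2 v,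
          dlt (GadgetString A B D u m x (fun j => if j = 1 then x 1 else x j - x (j-1))).length
            (fun k => (GadgetString A B D u m x
                (fun j => if j = 1 then x 1 else x j - x (j-1))).getD (k-1) D)
            ({A, B} : Finset α) i = 0) ∧
      (∀ j ∈ Finset.Icc 1 m, x j ≤ v →
        (∀ j' ∈ Finset.Icc 1 m, x j' ≤ v → x j' ≤ x j) →
        ∑ i ∈ Finset.Icc 2 v,
          dlt (GadgetString A B D u m x (fun j => if j = 1 then x 1 else x j - x (j-1))).length
            (fun k => (GadgetString A B D u m x
                (fun j => if j = 1 then x 1 else x j - x (j-1))).getD (k-1) D)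
            ({A, B} : Finset α) i = (x j : ℤ)) :=
  stmt18_general A B D hAB hAD hBD u m x hx hmono
end

section
/- Recovering lmco from co: for all w ≥ 2, lmco(w) = co(w) − co(w−1) + max(w − y₁, 0) − max(w − 1 − y₁, 0), where y₁ is the smallest right endpoint of a minimal co-occurrence of Q in S. -/
open Finset

section Aux
variable {α : Type*} (n : ℕ) (S : ℕ → α) (Q : Finset α)

lemma cooc_mono_left {i i' j : ℕ} (h : Cooc n S Q i j) (h1 : 1 ≤ i') (h2 : i' ≤ i) :
    Cooc n S Q i' j := by
  obtain ⟨hi, hij, hjn, hc⟩ := h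
  refine ⟨h1, le_trans h2 hij, hjn, fun c hc' => ?_⟩
  obtain ⟨k, hk1, hk2, hk3⟩ := hc c hc'
  exact ⟨k, le_trans h2 hk1, hk2, hk3⟩

lemma cooc_mono_right {i j j' : ℕ} (h : Cooc n S Q i j) (h1 : j ≤ j') (h2 : j' ≤ n) :
    Cooc n S Q i j' := by
  obtain ⟨hi, hij, hjn, hc⟩ := h
  refine ⟨hi, le_trans hij h1, h2, fun c hc' => ?_⟩
  obtain ⟨k, hk1, hk2, hk3⟩ := hc c hc'
  exact ⟨k, hk1, le_trans hk2 h1, hk3⟩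

noncomputable def ell (j : ℕ) : ℕ :=
  @Nat.findGreatest (fun i => Cooc n S Q i j) (Classical.decPred _) j

variable {n S Q}

lemma ell_cooc {j : ℕ} (hE : ∃ i, Cooc n S Q i j) : Cooc n S Q (ell n S Q j) j := by
  obtain ⟨i, hi⟩ := hE
  letI := Classical.decPred (fun i => Cooc n S Q i j)
  unfold ell
  exact Nat.findGreatest_spec (P := fun i => Cooc n S Q i j) hi.2.1 hi

lemma le_ell {i j : ℕ} (h : Cooc n S Q i j) : i ≤ ell n S Q j := by
  letI := Classical.decPred (fun i => Cooc n S Q i j)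
  unfold ell
  exact Nat.le_findGreatest (P := fun i => Cooc n S Q i j) h.2.1 h

lemma ell_le (j : ℕ) : ell n S Q j ≤ j :=
  @Nat.findGreatest_le (fun i => Cooc n S Q i j) (Classical.decPred _) j

lemma not_cooc_ell_succ (j : ℕ) : ¬ Cooc n S Q (ell n S Q j + 1) j := by
  by_cases h : ell n S Q j + 1 ≤ j
  · letI := Classical.decPred (fun i => Cooc n S Q i j)
    unfold ell
    exact Nat.findGreatest_is_greatest (P := fun i => Cooc n S Q i j) (by omega) h
  · intro hc; exact h hc.2.1

lemma leftMin_iff {i j : ℕ} :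
    LeftMinCooc n S Q i j ↔ (∃ i', Cooc n S Q i' j) ∧ i = ell n S Q j := by
  constructor
  · rintro ⟨hc, hnc⟩
    have hle : i ≤ ell n S Q j := le_ell hc
    rcases eq_or_lt_of_le hle with h | h
    · exact ⟨⟨i, hc⟩, h⟩
    · exact absurd (cooc_mono_left n S Q (ell_cooc ⟨i, hc⟩) (by omega) h) hnc
  · rintro ⟨hE, rfl⟩
    exact ⟨ell_cooc hE, not_cooc_ell_succ j⟩

/-- From any co-occurrence extract a minimal one with a right endpoint at most `j`. -/
lemma exists_minCooc {i j : ℕ} (h : Cooc n S Q i j) :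
    ∃ x y, MinCooc n S Q x y ∧ y ≤ j := by
  classical
  have hex : ∃ j', Cooc n S Q i j' := ⟨j, h⟩
  set y := @Nat.find (fun j' => Cooc n S Q i j') (Classical.decPred _) hex with hy
  have hcy : Cooc n S Q i y := @Nat.find_spec (fun j' => Cooc n S Q i j') (Classical.decPred _) hex
  have hyj : y ≤ j := @Nat.find_min' (fun j' => Cooc n S Q i j') (Classical.decPred _) hex j h
  have hnot : ¬ Cooc n S Q i (y - 1) := by
    intro hc
    have : y - 1 < y := by have := hcy.1.trans hcy.2.1; omega
    exact @Nat.find_min (fun j' => Cooc n S Q i j') (Classical.decPred _) hex _ this hc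
  refine ⟨ell n S Q y, y, ⟨ell_cooc ⟨i, hcy⟩, not_cooc_ell_succ y, ?_⟩, hyj⟩
  intro hc
  exact hnot (cooc_mono_left n S Q hc hcy.1 (le_ell hcy))

end Aux
section Counting
variable {α : Type*} (n : ℕ) (S : ℕ → α) (Q : Finset α)

def Lset (w : ℕ) : Set ℕ :=
  {j | (∃ i, Cooc n S Q i j) ∧ j - ell n S Q j + 1 = w}

def Aset (w : ℕ) : Set ℕ :=
  {k | w ≤ k ∧ (∃ i, Cooc n S Q i k) ∧ k - ell n S Q k + 1 ≤ w}

lemma Lset_finite (w : ℕ) : (Lset n S Q w).Finite := by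
  refine (Set.finite_Iic n).subset ?_
  rintro j ⟨⟨i, hc⟩, -⟩
  exact hc.2.2.1

lemma Aset_finite (w : ℕ) : (Aset n S Q w).Finite := by
  refine (Set.finite_Iic n).subset ?_
  rintro k ⟨-, ⟨i, hc⟩, -⟩
  exact hc.2.2.1

lemma lmco_eq (w : ℕ) : lmco n S Q w = (Lset n S Q w).ncard := by
  have him : {p : ℕ × ℕ | LeftMinCooc n S Q p.1 p.2 ∧ p.2 - p.1 + 1 = w}
      = (fun j => (ell n S Q j, j)) '' Lset n S Q w := by
    ext ⟨a, b⟩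
    simp only [Set.mem_setOf_eq, Set.mem_image, leftMin_iff, Lset, Prod.mk.injEq]
    constructor
    · rintro ⟨⟨hE, rfl⟩, hw⟩; exact ⟨b, ⟨hE, hw⟩, rfl, rfl⟩
    · rintro ⟨j, ⟨hE, hw⟩, rfl, rfl⟩; exact ⟨⟨hE, rfl⟩, hw⟩
  rw [lmco, him, Set.ncard_image_of_injective _ (fun a b hab => congrArg Prod.snd hab)]

lemma coN_eq {w : ℕ} (hw : 1 ≤ w) : coN n S Q w = (Aset n S Q w).ncard := by
  unfold coN Aset
  congr 1
  ext k
  simp only [Set.mem_setOf_eq]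
  constructor
  · rintro ⟨hwk, hkn, hc⟩
    have hle := le_ell hc
    have h1 := hc.1
    exact ⟨hwk, ⟨_, hc⟩, by omega⟩
  · rintro ⟨hwk, hE, hm⟩
    have hc := ell_cooc hE
    have h1 := hc.1; have h2 := hc.2.1; have h3 := hc.2.2.1
    exact ⟨hwk, h3, cooc_mono_left n S Q hc (by omega) (by omega)⟩

lemma key {w : ℕ} (hw : 2 ≤ w) :
    (Aset n S Q (w-1)).ncard + (Lset n S Q w).ncard
      = (Aset n S Q w).ncard + ({k | k = w - 1 ∧ ∃ i, Cooc n S Q i k} : Set ℕ).ncard := by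
  have hBfin : ({k | k = w - 1 ∧ ∃ i, Cooc n S Q i k} : Set ℕ).Finite := by
    refine (Set.finite_singleton (w-1)).subset ?_
    rintro k ⟨rfl, -⟩; exact rfl
  have hU : Aset n S Q (w-1) ∪ Lset n S Q w
      = Aset n S Q w ∪ {k | k = w - 1 ∧ ∃ i, Cooc n S Q i k} := by
    ext k
    simp only [Set.mem_union, Set.mem_setOf_eq, Aset, Lset]
    by_cases hE : ∃ i, Cooc n S Q i k
    · have hc := ell_cooc hE
      have e1 := hc.1; have e2 := hc.2.1
      simp only [hE, true_and, and_true]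
      omega
    · simp [hE]
  have hD1 : Disjoint (Aset n S Q (w-1)) (Lset n S Q w) := by
    rw [Set.disjoint_left]
    rintro k ⟨-, -, h1⟩ ⟨-, h2⟩
    omega
  have hD2 : Disjoint (Aset n S Q w) ({k | k = w - 1 ∧ ∃ i, Cooc n S Q i k} : Set ℕ) := by
    rw [Set.disjoint_left]
    rintro k ⟨h1, -, -⟩ ⟨rfl, -⟩
    omega
  rw [← Set.ncard_union_eq hD1 (Aset_finite n S Q _) (Lset_finite n S Q _), hU,
    Set.ncard_union_eq hD2 (Aset_finite n S Q _) hBfin]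

end Counting

theorem stmt19 {α : Type*} (n : ℕ) (S : ℕ → α) (Q : Finset α) (hQ : 2 ≤ Q.card)
    (x₁ y₁ : ℕ) (h₁ : MinCooc n S Q x₁ y₁)
    (hleast : ∀ x y : ℕ, MinCooc n S Q x y → y₁ ≤ y)
    (w : ℕ) (hw₁ : 2 ≤ w) (hw₂ : w ≤ n) :
    (lmco n S Q w : ℤ) =
      (coN n S Q w : ℤ) - (coN n S Q (w-1) : ℤ) +
        max ((w : ℤ) - y₁) 0 - max ((w : ℤ) - 1 - y₁) 0 := by
  classical
  have hy₁ : 1 ≤ y₁ := h₁.1.1.trans h₁.1.2.1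
  have hBc : ({k | k = w - 1 ∧ ∃ i, Cooc n S Q i k} : Set ℕ).ncard
      = if y₁ ≤ w - 1 then 1 else 0 := by
    by_cases hy : y₁ ≤ w - 1
    · rw [if_pos hy]
      have hset : ({k | k = w - 1 ∧ ∃ i, Cooc n S Q i k} : Set ℕ) = {w-1} := by
        ext k
        simp only [Set.mem_setOf_eq, Set.mem_singleton_iff]
        constructor
        · rintro ⟨rfl, -⟩; rfl
        · rintro rfl
          exact ⟨rfl, x₁, cooc_mono_right n S Q h₁.1 hy (by omega)⟩
      rw [hset, Set.ncard_singleton]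
    · rw [if_neg hy]
      have hset : ({k | k = w - 1 ∧ ∃ i, Cooc n S Q i k} : Set ℕ) = ∅ := by
        ext k
        simp only [Set.mem_setOf_eq, Set.mem_empty_iff_false, iff_false, not_and]
        rintro rfl ⟨i, hc⟩
        obtain ⟨x, y, hmin, hyle⟩ := exists_minCooc hc
        exact hy (le_trans (hleast x y hmin) hyle)
      rw [hset, Set.ncard_empty]
  have hmax : max ((w : ℤ) - y₁) 0 - max ((w : ℤ) - 1 - y₁) 0
      = if y₁ ≤ w - 1 then 1 else 0 := by
    rcases le_or_gt y₁ (w-1) with h | h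
    · rw [if_pos h, max_eq_left (by omega), max_eq_left (by omega)]; ring
    · rw [if_neg (by omega), max_eq_right (by omega), max_eq_right (by omega)]; ring
  have hkey := key n S Q hw₁
  rw [lmco_eq, coN_eq n S Q (by omega), coN_eq n S Q (by omega), add_sub_assoc, hmax]
  rw [hBc] at hkey
  by_cases hy : y₁ ≤ w - 1 <;> simp only [hy, if_pos, if_neg, if_true, if_false] at hkey ⊢ <;> omega
end
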